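/- Let (M,g) be a pseudo-Riemannian manifold, H a 3-form, and ∇⁺ = ∇^g + ½ g⁻¹H. Then the Ricci tensor of ∇⁺, defined by Ric⁺(Y,Z) = tr(X ↦ R^+(X,Y)Z), satisfies Ric⁺ = Ric^g − ¼ H∘H − ½ d*H, where (H∘H)(Y,Z) = Σⱼ εⱼ g(H(eⱼ,Y,·), H(eⱼ,Z,·)) for a g-orthonormal basis {eⱼ} with εⱼ = g(eⱼ,eⱼ), (d*H)(Y,Z) is regarded as a 2-form, and g(H(eⱼ,Y,·),H(eⱼ,Z,·)) uses the metric on 1-forms. -/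
import Mathlib


open Finset

/-- `∇^s_X Y = ∇^g_X Y + (s/2) g⁻¹H(X,Y,·)`, with `Hs = g⁻¹H`; `∇⁺ = ∇^1`. -/
noncomputable def connS {X : Type*} [AddCommGroup X] [Module ℝ X]
    (Dg : X → X → X) (Hs : X → X → X) (s : ℝ) (x y : X) : X :=
  Dg x y + (s / 2) • Hs x y

/-- The covariant derivative of the 3-form `H`. -/
noncomputable def covH {R X : Type*} (act : X → R → R) (Dg : X → X → X)
    (H : X → X → X → R) [Sub R] [Add R] (a y z w : X) : R :=
  act a (H y z w) - H (Dg a y) z w - H y (Dg a z) w - H y z (Dg a w)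

/-- The curvature `R^∇(x,y)z` of a connection `∇`. -/
noncomputable def curvOf {X : Type*} [AddCommGroup X]
    (D : X → X → X) (br : X → X → X) (x y z : X) : X :=
  D x (D y z) - D y (D x z) - D (br x y) z

/-- in the algebraic Koszul setting for an `n`-dimensional
pseudo-Riemannian manifold `(M,g)` with orthonormal frame `{eⱼ}`, `εⱼ = g(eⱼ,eⱼ)`, the
Ricci tensor of `∇⁺ = ∇^g + ½g⁻¹H` satisfies `Ric⁺ = Ric^g − ¼ H∘H − ½ d*H`, where
`Ric(Y,Z) = Σⱼ εⱼ g(R(eⱼ,Y)Z,eⱼ)` is the trace, `(H∘H)(Y,Z) = Σⱼ εⱼ g(H(eⱼ,Y,·),H(eⱼ,Z,·))`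
and `(d*H)(Y,Z) = −Σⱼ εⱼ (∇^g_{eⱼ}H)(eⱼ,Y,Z)`. -/
theorem bismut_ricci_formula
    {R : Type*} [CommRing R] [Algebra ℝ R]
    {X : Type*} [AddCommGroup X] [Module R X] [Module ℝ X] [IsScalarTower ℝ R X]
    (act : X → R → R) (br : X → X → X)
    (g : X → X → R) (H : X → X → X → R) (Dg : X → X → X)
    (hact_deriv : ∀ x f h, act x (f * h) = f * act x h + h * act x f)
    (hact_bracket : ∀ x y f, act (br x y) f = act x (act y f) - act y (act x f))
    (hg_symm : ∀ x y, g x y = g y x)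
    (hg_addl : ∀ x x' y, g (x + x') y = g x y + g x' y)
    (hg_smull : ∀ (f : R) x y, g (f • x) y = f * g x y)
    (hg_nondeg : ∀ x, (∀ y, g x y = 0) → x = 0)
    (hH_addl : ∀ x x' y z, H (x + x') y z = H x y z + H x' y z)
    (hH_smull : ∀ (f : R) x y z, H (f • x) y z = f * H x y z)
    (hH_alt12 : ∀ x y z, H x y z = - H y x z)
    (hH_alt23 : ∀ x y z, H x y z = - H x z y)
    (hD_smul1 : ∀ (f : R) x y, Dg (f • x) y = f • Dg x y)
    (hD_add1 : ∀ x x' y, Dg (x + x') y = Dg x y + Dg x' y)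
    (hD_add2 : ∀ x y y', Dg x (y + y') = Dg x y + Dg x y')
    (hD_leibniz : ∀ x (f : R) y, Dg x (f • y) = act x f • y + f • Dg x y)
    (hD_torsionfree : ∀ x y, Dg x y - Dg y x = br x y)
    (hD_metric : ∀ x y z, act x (g y z) = g (Dg x y) z + g y (Dg x z))
    (Hs : X → X → X)
    (hHs : ∀ x y z, g (Hs x y) z = H x y z)
    -- a `g`-orthonormal frame `{eⱼ}` with `εⱼ = g(eⱼ,eⱼ) = ±1`
    {n : ℕ} (e : Fin n → X)
    (h_orth : ∀ i j, i ≠ j → g (e i) (e j) = 0)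
    (h_unit : ∀ i, g (e i) (e i) = 1 ∨ g (e i) (e i) = -1)
    (h_frame : ∀ v : X, v = ∑ i, (g (e i) (e i) * g v (e i)) • e i) :
    ∀ y z : X,
      (∑ j, g (e j) (e j) * g (curvOf (connS Dg Hs 1) br (e j) y z) (e j))
        = (∑ j, g (e j) (e j) * g (curvOf Dg br (e j) y z) (e j))
          - (1/4 : ℝ) • (∑ j, g (e j) (e j) * g (Hs (e j) y) (Hs (e j) z))
          - (1/2 : ℝ) • (-(∑ j, g (e j) (e j) * covH act Dg H (e j) (e j) y z)) := by
  -- halving tricks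
  have halfR : ∀ b u : R, b + b = u → b = (1/2:ℝ) • u := by
    intro b u h
    have h2 : ((2:ℝ)) • b = u := by rw [two_smul]; exact h
    calc b = (1/2:ℝ) • ((2:ℝ) • b) := by rw [smul_smul]; norm_num
      _ = (1/2:ℝ) • u := by rw [h2]
  have halfX : ∀ b u : X, b + b = u → b = (1/2:ℝ) • u := by
    intro b u h
    have h2 : ((2:ℝ)) • b = u := by rw [two_smul]; exact h
    calc b = (1/2:ℝ) • ((2:ℝ) • b) := by rw [smul_smul]; norm_num
      _ = (1/2:ℝ) • u := by rw [h2]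
  -- g lemmas
  have gsubl : ∀ x x' z : X, g (x - x') z = g x z - g x' z := by
    intro x x' z
    have h := hg_addl (x - x') x' z
    rw [sub_add_cancel] at h
    exact eq_sub_of_add_eq h.symm
  have gRsmull : ∀ (r : ℝ) (x z : X), g (r • x) z = r • g x z := by
    intro r x z
    rw [← algebraMap_smul R r x, hg_smull, Algebra.smul_def]
  -- act lemmas
  have act0 : ∀ x : X, act x (0:R) = 0 := by
    intro x
    have h := hact_deriv x 0 0
    simpa using h
  have act1 : ∀ x : X, act x (1:R) = 0 := by
    intro x
    have h := hact_deriv x 1 1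
    simp only [mul_one, one_mul] at h
    exact (left_eq_add.mp h)
  have actm1 : ∀ x : X, act x (-1:R) = 0 := by
    intro x
    have h := hact_deriv x (-1) (-1)
    rw [neg_one_mul, neg_neg, act1] at h
    have h2 : act x (-1:R) + act x (-1:R) = 0 := by linear_combination h
    have := halfR _ _ h2
    simpa using this
  have actneg : ∀ (x : X) (f : R), act x (-f) = - act x f := by
    intro x f
    have h := hact_deriv x (-1) f
    rw [neg_one_mul, actm1, mul_zero, add_zero] at h
    linear_combination h
  -- H lemmas
  have H13 : ∀ x y z : X, H x y z = - H z y x := by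
    intro x y z
    linear_combination hH_alt23 x y z - hH_alt12 x z y + hH_alt23 z x y
  have Hdiag13 : ∀ a z : X, H a z a = 0 := by
    intro a z
    have h := H13 a z a
    have h2 : H a z a + H a z a = 0 := by linear_combination h
    have := halfR _ _ h2
    simpa using this
  have Hsub1 : ∀ u v y z : X, H (u - v) y z = H u y z - H v y z := by
    intro u v y z
    have h := hH_addl (u - v) v y z
    rw [sub_add_cancel] at h
    exact eq_sub_of_add_eq h.symm
  have Hadd2 : ∀ x y y' z : X, H x (y + y') z = H x y z + H x y' z := by
    intro x y y' z
    rw [hH_alt12 x (y + y') z, hH_addl, hH_alt12 y x z, hH_alt12 y' x z]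
    ring
  have HRsmul2 : ∀ (r : ℝ) (x y z : X), H x (r • y) z = r • H x y z := by
    intro r x y z
    rw [hH_alt12 x (r • y) z, ← algebraMap_smul R r y, hH_smull,
      hH_alt12 y x z, Algebra.smul_def]
    ring
  -- extensionality from nondegeneracy
  have gext : ∀ u v : X, (∀ w, g u w = g v w) → u = v := by
    intro u v h
    have h0 : ∀ w, g (u - v) w = 0 := by
      intro w; rw [gsubl, h, sub_self]
    exact sub_eq_zero.mp (hg_nondeg _ h0)
  -- Hs lemmas
  have Hs_add2 : ∀ x u v : X, Hs x (u + v) = Hs x u + Hs x v := by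
    intro x u v
    apply gext
    intro w
    rw [hHs, hg_addl, hHs, hHs, Hadd2]
  have Hs_sub1 : ∀ u v z : X, Hs (u - v) z = Hs u z - Hs v z := by
    intro u v z
    apply gext
    intro w
    rw [hHs, gsubl, hHs, hHs, Hsub1]
  have Hs_rsmul2 : ∀ (r : ℝ) (x v : X), Hs x (r • v) = r • Hs x v := by
    intro r x v
    apply gext
    intro w
    rw [hHs, gRsmull, hHs, HRsmul2]
  -- Dg half lemma
  have Dg_half2 : ∀ x v : X, Dg x ((1/2:ℝ) • v) = (1/2:ℝ) • Dg x v := by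
    intro x v
    apply halfX
    rw [← hD_add2, ← add_smul]
    norm_num
  -- covariant derivative of H is g-paired with the vector version
  have covgen : ∀ x p q w : X,
      covH act Dg H x p q w = g (Dg x (Hs p q) - Hs (Dg x p) q - Hs p (Dg x q)) w := by
    intro x p q w
    simp only [covH]
    rw [← hHs p q w, hD_metric, ← hHs (Dg x p) q w, ← hHs p (Dg x q) w,
      ← hHs p q (Dg x w), gsubl, gsubl]
    ring
  have covswap34 : ∀ a y z w : X,
      covH act Dg H a y z w = - covH act Dg H a y w z := by
    intro a y z w
    simp only [covH]
    rw [hH_alt23 y z w, actneg, hH_alt23 (Dg a y) z w, hH_alt23 y (Dg a z) w,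
      hH_alt23 y z (Dg a w)]
    ring
  have covswap23 : ∀ a y z w : X,
      covH act Dg H a y z w = - covH act Dg H a z y w := by
    intro a y z w
    simp only [covH]
    rw [hH_alt12 y z w, actneg, hH_alt12 (Dg a y) z w, hH_alt12 y (Dg a z) w,
      hH_alt12 y z (Dg a w)]
    ring
  have covcyc : ∀ a y z : X, covH act Dg H a y z a = covH act Dg H a a y z := by
    intro a y z
    rw [covswap34 a y z a, covswap23 a y a z]
    ring
  have covzero : ∀ y a z : X, covH act Dg H y a z a = 0 := by
    intro y a z
    simp only [covH]
    rw [Hdiag13 a z, act0, Hdiag13 a (Dg y z), H13 (Dg y a) z a]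
    ring
  -- vector-level expansion of the curvature of the modified connection
  have expand : ∀ a y z : X,
      curvOf (connS Dg Hs 1) br a y z
        = curvOf Dg br a y z
          + (1/2:ℝ) • (Dg a (Hs y z) - Hs (Dg a y) z - Hs y (Dg a z))
          - (1/2:ℝ) • (Dg y (Hs a z) - Hs (Dg y a) z - Hs a (Dg y z))
          + (1/4:ℝ) • Hs a (Hs y z) - (1/4:ℝ) • Hs y (Hs a z) := by
    intro a y z
    simp only [curvOf, connS]
    norm_num
    rw [hD_add2 a (Dg y z), Dg_half2, Hs_add2 a (Dg y z), Hs_rsmul2,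
      hD_add2 y (Dg a z), Dg_half2, Hs_add2 y (Dg a z), Hs_rsmul2,
      ← hD_torsionfree a y, Hs_sub1]
    module
  -- pointwise (per frame index) identity
  have key : ∀ a y z : X,
      g (curvOf (connS Dg Hs 1) br a y z) a
        = g (curvOf Dg br a y z) a
          - (1/4:ℝ) • g (Hs a y) (Hs a z)
          + (1/2:ℝ) • covH act Dg H a a y z := by
    intro a y z
    rw [expand a y z]
    simp only [gsubl, hg_addl, gRsmull]
    have hT1 : g (Dg a (Hs y z)) a - g (Hs (Dg a y) z) a - g (Hs y (Dg a z)) a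
        = covH act Dg H a a y z := by
      rw [← gsubl, ← gsubl, ← covgen a y z a, covcyc]
    have hT2 : g (Dg y (Hs a z)) a - g (Hs (Dg y a) z) a - g (Hs a (Dg y z)) a
        = (0:R) := by
      rw [← gsubl, ← gsubl, ← covgen y a z a]
      exact covzero y a z
    have h1 : g (Hs a (Hs y z)) a = 0 := by rw [hHs, Hdiag13]
    have h2 : g (Hs y (Hs a z)) a = g (Hs a y) (Hs a z) := by
      rw [hHs, H13 y (Hs a z) a, hH_alt23 a (Hs a z) y, ← hHs a y (Hs a z)]
      ring
    rw [h1, h2, hT1, hT2]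
    module
  intro y z
  have hsum : (∑ j, g (e j) (e j) * g (curvOf (connS Dg Hs 1) br (e j) y z) (e j))
      = ∑ j, (g (e j) (e j) * g (curvOf Dg br (e j) y z) (e j)
          - (1/4:ℝ) • (g (e j) (e j) * g (Hs (e j) y) (Hs (e j) z))
          + (1/2:ℝ) • (g (e j) (e j) * covH act Dg H (e j) (e j) y z)) := by
    apply Finset.sum_congr rfl
    intro j _
    rw [key (e j) y z]
    rw [mul_add, mul_sub, mul_smul_comm, mul_smul_comm]
  rw [hsum, Finset.sum_add_distrib, Finset.sum_sub_distrib, ← Finset.smul_sum,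
    ← Finset.smul_sum]
  module
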